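/- arXiv:2301.02860 — 3 statements merged into one kernel-verified Lean document; each statement's English description precedes it below -/
import Mathlib

section
/- Let ρ, f : ℝ³ × ℝ → ℝ and v, n : ℝ³ × ℝ → ℝ³ be C¹, and suppose the surface continuity equation D_t^S ρ + (div_Γ v) ρ = 0 holds at a point (x,t). Then at that point, D_t^N (ρ f) + div_Γ (ρ f v) = ρ D_t^S f. -/
noncomputable section

open scoped BigOperators
open Matrix

/-- Points of `ℝ³`. -/
abbrev V3 : Type := Fin 3 → ℝ

/-- Points of space-time `ℝ³ × ℝ`. -/
abbrev Pt : Type := V3 × ℝ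

/-- Euclidean dot product on `ℝ³`. -/
def dot (a b : V3) : ℝ := ∑ j, a j * b j

/-- Spatial partial derivative `∂_j f` (at fixed time). -/
def pd (f : Pt → ℝ) (j : Fin 3) (p : Pt) : ℝ := fderiv ℝ f p (Pi.single j 1, 0)

/-- Time derivative `∂_t f`. -/
def ptd (f : Pt → ℝ) (p : Pt) : ℝ := fderiv ℝ f p (0, 1)

/-- Spatial gradient `∇f`. -/
def grad (f : Pt → ℝ) (p : Pt) : V3 := fun j => pd f j p

/-- Tangential derivative `∂^Γ_j f = ∂_j f − n_j (n·∇f)`. -/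
def pdG (n : Pt → V3) (f : Pt → ℝ) (j : Fin 3) (p : Pt) : ℝ :=
  pd f j p - n p j * dot (n p) (grad f p)

/-- Surface gradient `∇_Γ f`. -/
def gradG (n : Pt → V3) (f : Pt → ℝ) (p : Pt) : V3 := fun j => pdG n f j p

/-- Surface divergence `div_Γ V = Σ_j ∂^Γ_j V_j` of a vector field. -/
def divG (n : Pt → V3) (V : Pt → V3) (p : Pt) : ℝ :=
  ∑ j, pdG n (fun q => V q j) j p

/-- Row-wise surface divergence of a matrix field:
`(div_Γ M)_i = Σ_j ∂^Γ_j M_{ij}`. -/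
def divGM (n : Pt → V3) (M : Pt → Matrix (Fin 3) (Fin 3) ℝ) (p : Pt) : V3 :=
  fun i => ∑ j, pdG n (fun q => M q i j) j p

/-- Material derivative `D_t^S f = ∂_t f + (v·∇)f`. -/
def DtS (v : Pt → V3) (f : Pt → ℝ) (p : Pt) : ℝ := ptd f p + dot (v p) (grad f p)

/-- Normal-time derivative `D_t^N f = ∂_t f + (v·n)(n·∇)f`. -/
def DtN (v n : Pt → V3) (f : Pt → ℝ) (p : Pt) : ℝ :=
  ptd f p + dot (v p) (n p) * dot (n p) (grad f p)


lemma dir_mul (g h : Pt → ℝ) (p w : Pt) (hg : DifferentiableAt ℝ g p)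
    (hh : DifferentiableAt ℝ h p) :
    fderiv ℝ (fun q => g q * h q) p w = g p * fderiv ℝ h p w + h p * fderiv ℝ g p w := by
  rw [fderiv_fun_mul hg hh]
  simp [smul_eq_mul]

/-- if the surface continuity equation `D_t^S ρ + (div_Γ v) ρ = 0`
holds at `p`, then `D_t^N (ρ f) + div_Γ (ρ f v) = ρ D_t^S f` at `p`. -/
theorem surface_transport_identity_scalar
    (ρ f : Pt → ℝ) (v n : Pt → V3)
    (hρ : ContDiff ℝ 1 ρ) (hf : ContDiff ℝ 1 f)
    (hv : ContDiff ℝ 1 v) (hn : ContDiff ℝ 1 n)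
    (p : Pt) (hcont : DtS v ρ p + divG n v p * ρ p = 0) :
    DtN v n (fun q => ρ q * f q) p
      + divG n (fun q => (ρ q * f q) • v q) p
      = ρ p * DtS v f p := by
  have hρd : DifferentiableAt ℝ ρ p := (hρ.differentiable one_ne_zero) p
  have hfd : DifferentiableAt ℝ f p := (hf.differentiable one_ne_zero) p
  have hvd : ∀ j, DifferentiableAt ℝ (fun q => v q j) p := fun j =>
    ((differentiable_pi.mp (hv.differentiable one_ne_zero)) j) p
  have key1 : ∀ w, fderiv ℝ (fun q => ρ q * f q) p w
      = ρ p * fderiv ℝ f p w + f p * fderiv ℝ ρ p w := fun w => dir_mul ρ f p w hρd hfd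
  have key2 : ∀ j w, fderiv ℝ (fun q => (ρ q * f q) * v q j) p w
      = (ρ p * f p) * fderiv ℝ (fun q => v q j) p w
        + v p j * (ρ p * fderiv ℝ f p w + f p * fderiv ℝ ρ p w) := by
    intro j w
    rw [dir_mul (fun q => ρ q * f q) (fun q => v q j) p w (hρd.mul hfd) (hvd j), key1]
  simp only [DtN, DtS, divG, pdG, grad, dot, pd, ptd, Pi.smul_apply, smul_eq_mul,
    Fin.sum_univ_three] at hcont ⊢
  simp only [key1, key2]
  linear_combination f p * hcont
end
end

section
/- Let ρ : ℝ³ × ℝ → ℝ and v, n : ℝ³ × ℝ → ℝ³ be C¹, and suppose the surface continuity equation D_t^S ρ + (div_Γ v) ρ = 0 holds at a point (x,t). Then at that point, D_t^N (ρ v) + div_Γ (ρ v ⊗ v) = ρ D_t^S v, where D_t^N and D_t^S act componentwise on vector fields and ρ v ⊗ v is the matrix with entries ρ v_i v_j. -/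
noncomputable section

open scoped BigOperators
open Matrix

/-- if the surface continuity equation `D_t^S ρ + (div_Γ v) ρ = 0`
holds at `p`, then componentwise
`D_t^N (ρ v) + div_Γ (ρ v ⊗ v) = ρ D_t^S v` at `p`. -/
theorem surface_transport_identity_momentum
    (ρ : Pt → ℝ) (v n : Pt → V3)
    (hρ : ContDiff ℝ 1 ρ) (hv : ContDiff ℝ 1 v) (hn : ContDiff ℝ 1 n)
    (p : Pt) (hcont : DtS v ρ p + divG n v p * ρ p = 0) :
    ∀ i : Fin 3,
      DtN v n (fun q => ρ q * v q i) p
        + divGM n (fun q => Matrix.of fun i' j' => ρ q * v q i' * v q j') p i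
        = ρ p * DtS v (fun q => v q i) p := by
  intro i
  have hρd : DifferentiableAt ℝ ρ p := hρ.differentiable one_ne_zero p
  have hvd : ∀ j : Fin 3, DifferentiableAt ℝ (fun q => v q j) p := fun j =>
    differentiableAt_pi.mp ((hv.differentiable one_ne_zero) p) j
  have fd_mul : ∀ (f g : Pt → ℝ), DifferentiableAt ℝ f p → DifferentiableAt ℝ g p →
      ∀ w : Pt, fderiv ℝ (fun q => f q * g q) p w
        = fderiv ℝ f p w * g p + f p * fderiv ℝ g p w := by
    intro f g hf hg w
    rw [fderiv_fun_mul hf hg]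
    simp [ContinuousLinearMap.add_apply, ContinuousLinearMap.smul_apply, smul_eq_mul]
    ring
  have h2 : ∀ (j : Fin 3) (w : Pt), fderiv ℝ (fun q => ρ q * v q j) p w
      = fderiv ℝ ρ p w * v p j + ρ p * fderiv ℝ (fun q => v q j) p w := fun j w =>
    fd_mul ρ _ hρd (hvd j) w
  have h3 : ∀ (a b : Fin 3) (w : Pt), fderiv ℝ (fun q => ρ q * v q a * v q b) p w
      = (fderiv ℝ ρ p w * v p a + ρ p * fderiv ℝ (fun q => v q a) p w) * v p b
        + ρ p * v p a * fderiv ℝ (fun q => v q b) p w := by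
    intro a b w
    rw [fd_mul (fun q => ρ q * v q a) (fun q => v q b) (hρd.mul (hvd a)) (hvd b) w, fd_mul _ _ hρd (hvd a) w]
  simp only [DtS, DtN, divG, divGM, pdG, pd, ptd, grad, dot, Matrix.of_apply,
    Fin.sum_univ_three] at hcont ⊢
  simp only [h2, h3]
  linear_combination (v p i) * hcont
end
end

section
/- Let ρ, e, θ, π, μ, λ, κ : ℝ³ × ℝ → ℝ, v : ℝ³ × ℝ → ℝ³, F : ℝ³ × ℝ → ℝ³, G : ℝ³ × ℝ → ℝ be smooth, and let n : ℝ³ × ℝ → ℝ³ be smooth with |n(x,t)| = 1 everywhere. Set q_S = κ ∇_Γ θ, T_S = μ D_Γ(v) + λ (div_Γ v) P − π P, e_{D_S} = μ |D_Γ(v)|² + λ (div_Γ v)², and E = ρ|v|²/2 + ρ e. Suppose that at a point (x,t): D_t^S ρ + (div_Γ v) ρ = 0, ρ D_t^S e + (div_Γ v) π = div_Γ q_S + e_{D_S} + G, and ρ D_t^S v = div_Γ T_S + F. Then at that point, D_t^N E + div_Γ (E v − q_S − T_S v) = F·v + G. -/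
noncomputable section

open scoped BigOperators
open Matrix

/-- Orthogonal projection `P = I − n⊗n` as a matrix. -/
def Pmat (n : Pt → V3) (p : Pt) : Matrix (Fin 3) (Fin 3) ℝ :=
  Matrix.of fun i j => (if i = j then (1 : ℝ) else 0) - n p i * n p j

/-- Surface gradient matrix `[∇_Γ v]_{ij} = ∂^Γ_j v_i`. -/
def gradGM (n v : Pt → V3) (p : Pt) : Matrix (Fin 3) (Fin 3) ℝ :=
  Matrix.of fun i j => pdG n (fun q => v q i) j p

/-- Surface strain tensor `D_Γ(v) = (P ∇_Γ v + (P ∇_Γ v)ᵀ)/2`. -/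
def DGam (n v : Pt → V3) (p : Pt) : Matrix (Fin 3) (Fin 3) ℝ :=
  (2 : ℝ)⁻¹ • (Pmat n p * gradGM n v p + (Pmat n p * gradGM n v p)ᵀ)

/-- Frobenius inner product. -/
def frob (A B : Matrix (Fin 3) (Fin 3) ℝ) : ℝ := ∑ i, ∑ j, A i j * B i j

/-- Surface stress tensor `T_S = μ D_Γ(v) + λ (div_Γ v) P − π P`. -/
def TS (n v : Pt → V3) (mu lam pres : Pt → ℝ) (p : Pt) : Matrix (Fin 3) (Fin 3) ℝ :=
  mu p • DGam n v p + (lam p * divG n v p) • Pmat n p - pres p • Pmat n p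

/-- Total energy `E = ρ|v|²/2 + ρ e`. -/
def Efun (ρ e : Pt → ℝ) (v : Pt → V3) (q : Pt) : ℝ :=
  ρ q * dot (v q) (v q) / 2 + ρ q * e q

variable {f g : Pt → ℝ} {p : Pt} {j : Fin 3}

lemma pd_add (hf : DifferentiableAt ℝ f p) (hg : DifferentiableAt ℝ g p) :
    pd (fun q => f q + g q) j p = pd f j p + pd g j p := by
  unfold pd; rw [fderiv_fun_add hf hg]; rfl

lemma pd_sub (hf : DifferentiableAt ℝ f p) (hg : DifferentiableAt ℝ g p) :
    pd (fun q => f q - g q) j p = pd f j p - pd g j p := by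
  unfold pd; rw [fderiv_fun_sub hf hg]; rfl

lemma pd_mul (hf : DifferentiableAt ℝ f p) (hg : DifferentiableAt ℝ g p) :
    pd (fun q => f q * g q) j p = f p * pd g j p + g p * pd f j p := by
  unfold pd; rw [fderiv_fun_mul hf hg]; simp [mul_comm]

lemma ptd_add (hf : DifferentiableAt ℝ f p) (hg : DifferentiableAt ℝ g p) :
    ptd (fun q => f q + g q) p = ptd f p + ptd g p := by
  unfold ptd; rw [fderiv_fun_add hf hg]; rfl

lemma ptd_mul (hf : DifferentiableAt ℝ f p) (hg : DifferentiableAt ℝ g p) :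
    ptd (fun q => f q * g q) p = f p * ptd g p + g p * ptd f p := by
  unfold ptd; rw [fderiv_fun_mul hf hg]; simp [mul_comm]

lemma contDiff_pd (hf : ContDiff ℝ (⊤ : ℕ∞) f) (j : Fin 3) :
    ContDiff ℝ (⊤ : ℕ∞) (fun q => pd f j q) :=
  (hf.fderiv_right (m := (⊤ : ℕ∞)) (by simp)).clm_apply contDiff_const

lemma pd_sum {ι : Type*} (s : Finset ι) (f : ι → Pt → ℝ) (j : Fin 3) (p : Pt)
    (hf : ∀ i ∈ s, DifferentiableAt ℝ (f i) p) :
    pd (fun q => ∑ i ∈ s, f i q) j p = ∑ i ∈ s, pd (f i) j p := by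
  unfold pd; rw [fderiv_fun_sum hf]; simp

lemma ptd_sum {ι : Type*} (s : Finset ι) (f : ι → Pt → ℝ) (p : Pt)
    (hf : ∀ i ∈ s, DifferentiableAt ℝ (f i) p) :
    ptd (fun q => ∑ i ∈ s, f i q) p = ∑ i ∈ s, ptd (f i) p := by
  unfold ptd; rw [fderiv_fun_sum hf]; simp

lemma pdG_expand (n : Pt → V3) (f : Pt → ℝ) (j : Fin 3) (p : Pt) :
    pdG n f j p = pd f j p - n p j * ∑ k, n p k * pd f k p := by
  rfl

lemma pdG_add {n : Pt → V3} {f g : Pt → ℝ} {j : Fin 3} {p : Pt}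
    (hf : DifferentiableAt ℝ f p) (hg : DifferentiableAt ℝ g p) :
    pdG n (fun q => f q + g q) j p = pdG n f j p + pdG n g j p := by
  simp only [pdG_expand, pd_add hf hg, mul_add, Finset.sum_add_distrib]; ring

lemma pdG_sub {n : Pt → V3} {f g : Pt → ℝ} {j : Fin 3} {p : Pt}
    (hf : DifferentiableAt ℝ f p) (hg : DifferentiableAt ℝ g p) :
    pdG n (fun q => f q - g q) j p = pdG n f j p - pdG n g j p := by
  simp only [pdG_expand, pd_sub hf hg, mul_sub, Finset.sum_sub_distrib]; ring

lemma pdG_mul {n : Pt → V3} {f g : Pt → ℝ} {j : Fin 3} {p : Pt}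
    (hf : DifferentiableAt ℝ f p) (hg : DifferentiableAt ℝ g p) :
    pdG n (fun q => f q * g q) j p = f p * pdG n g j p + g p * pdG n f j p := by
  simp only [pdG_expand, pd_mul hf hg, Fin.sum_univ_three]; ring

lemma pdG_sum {ι : Type*} {n : Pt → V3} (s : Finset ι) (f : ι → Pt → ℝ) (j : Fin 3) (p : Pt)
    (hf : ∀ i ∈ s, DifferentiableAt ℝ (f i) p) :
    pdG n (fun q => ∑ i ∈ s, f i q) j p = ∑ i ∈ s, pdG n (f i) j p := by
  simp only [pdG_expand, pd_sum s f _ p hf, Finset.mul_sum, Finset.sum_sub_distrib]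
  congr 1
  exact Finset.sum_comm

lemma DtS_expand (v : Pt → V3) (f : Pt → ℝ) (p : Pt) :
    DtS v f p = ptd f p + ∑ k, v p k * pd f k p := rfl

lemma DtS_mul {v : Pt → V3} {f g : Pt → ℝ} {p : Pt}
    (hf : DifferentiableAt ℝ f p) (hg : DifferentiableAt ℝ g p) :
    DtS v (fun q => f q * g q) p = f p * DtS v g p + g p * DtS v f p := by
  simp only [DtS_expand, ptd_mul hf hg, pd_mul hf hg, Fin.sum_univ_three]; ring

lemma DtS_add {v : Pt → V3} {f g : Pt → ℝ} {p : Pt}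
    (hf : DifferentiableAt ℝ f p) (hg : DifferentiableAt ℝ g p) :
    DtS v (fun q => f q + g q) p = DtS v f p + DtS v g p := by
  simp only [DtS_expand, ptd_add hf hg, pd_add hf hg, Fin.sum_univ_three]; ring

-- smoothness
lemma contDiff_pdG {n : Pt → V3} {f : Pt → ℝ} (hn : ContDiff ℝ (⊤ : ℕ∞) n) (hf : ContDiff ℝ (⊤ : ℕ∞) f)
    (j : Fin 3) : ContDiff ℝ (⊤ : ℕ∞) (fun q => pdG n f j q) := by
  simp only [pdG_expand]
  apply ContDiff.sub (contDiff_pd hf j)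
  apply ContDiff.mul ((contDiff_pi.mp hn) j)
  exact ContDiff.sum fun k _ => ((contDiff_pi.mp hn) k).mul (contDiff_pd hf k)

lemma frob_trace (A B : Matrix (Fin 3) (Fin 3) ℝ) : frob A B = Matrix.trace (A * Bᵀ) := by
  simp [frob, Matrix.trace, Matrix.mul_apply, Matrix.diag]

lemma frob_add (A B C : Matrix (Fin 3) (Fin 3) ℝ) :
    frob (A + B) C = frob A C + frob B C := by
  simp [frob, add_mul, Finset.sum_add_distrib]

lemma frob_sub (A B C : Matrix (Fin 3) (Fin 3) ℝ) :
    frob (A - B) C = frob A C - frob B C := by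
  simp [frob, sub_mul, Finset.sum_sub_distrib]

lemma frob_smul (c : ℝ) (A B : Matrix (Fin 3) (Fin 3) ℝ) :
    frob (c • A) B = c * frob A B := by
  simp [frob, Finset.mul_sum, mul_assoc]

lemma pdG_n_dot {n : Pt → V3} {p : Pt} (hunit : dot (n p) (n p) = 1) (f : Pt → ℝ) :
    ∑ j, n p j * pdG n f j p = 0 := by
  have h1 : n p 0 * n p 0 + n p 1 * n p 1 + n p 2 * n p 2 = 1 := by
    simpa [dot, Fin.sum_univ_three] using hunit
  simp only [pdG_expand, Fin.sum_univ_three]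
  linear_combination (-(n p 0 * pd f 0 p + n p 1 * pd f 1 p + n p 2 * pd f 2 p)) * h1

lemma frob_TS_main (n v : Pt → V3) (mu lam pres : Pt → ℝ) (p : Pt)
    (hunit : dot (n p) (n p) = 1) :
    frob (TS n v mu lam pres p) (gradGM n v p)
      = mu p * frob (DGam n v p) (DGam n v p)
        + lam p * (divG n v p) ^ 2 - pres p * divG n v p := by
  have h1 : n p 0 * n p 0 + n p 1 * n p 1 + n p 2 * n p 2 = 1 := by
    simpa [dot, Fin.sum_univ_three] using hunit
  set N : V3 := n p with hN
  set M : Matrix (Fin 3) (Fin 3) ℝ := gradGM n v p with hMdef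
  set P : Matrix (Fin 3) (Fin 3) ℝ := Pmat n p with hPdef
  have hP : P = 1 - vecMulVec N N := by
    ext i j; simp [hPdef, Pmat, vecMulVec_apply, Matrix.one_apply, hN]
  have hvv : vecMulVec N N * vecMulVec N N = vecMulVec N N := by
    ext i j
    simp [Matrix.mul_apply, vecMulVec_apply, Fin.sum_univ_three]
    linear_combination (N i * N j) * h1
  have hPP : P * P = P := by
    rw [hP, sub_mul, mul_sub, mul_sub, one_mul, mul_one, hvv]
    simp only [one_mul]
    abel
  have hPt : Pᵀ = P := by
    rw [hP]; ext i j
    simp [Matrix.transpose_apply, vecMulVec_apply, Matrix.one_apply, eq_comm, mul_comm]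
  have hQM : vecMulVec N N * Mᵀ = 0 := by
    ext i j
    simp only [Matrix.mul_apply, vecMulVec_apply, Matrix.transpose_apply, hMdef, gradGM,
      Matrix.of_apply, Matrix.zero_apply, mul_assoc, ← Finset.mul_sum]
    rw [pdG_n_dot hunit]
    ring
  have hPMt : P * Mᵀ = Mᵀ := by rw [hP, sub_mul, one_mul, hQM, sub_zero]
  set D : Matrix (Fin 3) (Fin 3) ℝ := DGam n v p with hDdef
  have hD : D = (2:ℝ)⁻¹ • (P * M + (P * M)ᵀ) := rfl
  have hDt : Dᵀ = D := by
    rw [hD, Matrix.transpose_smul, Matrix.transpose_add, Matrix.transpose_transpose, add_comm]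
  have hPD : P * D = D := by
    rw [hD, Matrix.mul_smul, Matrix.mul_add, ← Matrix.mul_assoc, hPP,
      Matrix.transpose_mul, hPt, ← Matrix.mul_assoc, hPMt]
  have hDP : D * P = D := by
    have := congrArg Matrix.transpose hPD
    rwa [Matrix.transpose_mul, hPt, hDt] at this
  have htrDM : Matrix.trace (D * Mᵀ) = Matrix.trace (D * M) := by
    rw [← Matrix.trace_transpose (D * Mᵀ), Matrix.transpose_mul, Matrix.transpose_transpose,
      hDt, Matrix.trace_mul_comm]
  have hfrobPM : frob P M = divG n v p := by
    rw [frob_trace, hPMt, Matrix.trace_transpose]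
    simp [Matrix.trace, Matrix.diag, hMdef, gradGM, divG]
  have hfrobDM : frob D M = Matrix.trace (D * M) := by rw [frob_trace, htrDM]
  have hfrobDD : frob D D = Matrix.trace (D * M) := by
    rw [frob_trace, hDt]
    have hDD : D * D = (2:ℝ)⁻¹ • (D * (P * M) + D * (P * M)ᵀ) := by
      rw [hD, Matrix.mul_smul, Matrix.mul_add]
    have e1 : Matrix.trace (D * (P * M)) = Matrix.trace (D * M) := by
      rw [← Matrix.mul_assoc, hDP]
    have e2 : Matrix.trace (D * (P * M)ᵀ) = Matrix.trace (D * M) := by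
      rw [Matrix.transpose_mul, hPt, ← Matrix.mul_assoc, Matrix.trace_mul_cycle,
        hPD, htrDM]
    rw [hDD, Matrix.trace_smul, Matrix.trace_add, e1, e2, smul_eq_mul]
    ring
  have hTS : TS n v mu lam pres p = mu p • D + (lam p * divG n v p) • P - pres p • P := rfl
  rw [hTS, frob_sub, frob_add, frob_smul, frob_smul, frob_smul, hfrobPM, hfrobDM, hfrobDD]
  ring

lemma pd_mul_const {f : Pt → ℝ} {p : Pt} {j : Fin 3} (hf : DifferentiableAt ℝ f p) (c : ℝ) :
    pd (fun q => f q * c) j p = pd f j p * c := by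
  unfold pd; rw [fderiv_mul_const hf]; simp [mul_comm]

lemma ptd_mul_const {f : Pt → ℝ} {p : Pt} (hf : DifferentiableAt ℝ f p) (c : ℝ) :
    ptd (fun q => f q * c) p = ptd f p * c := by
  unfold ptd; rw [fderiv_mul_const hf]; simp [mul_comm]

lemma DtS_mul_const {v : Pt → V3} {f : Pt → ℝ} {p : Pt} (hf : DifferentiableAt ℝ f p) (c : ℝ) :
    DtS v (fun q => f q * c) p = DtS v f p * c := by
  simp only [DtS_expand, ptd_mul_const hf, pd_mul_const hf, Fin.sum_univ_three]; ring

lemma DtS_sum {ι : Type*} {v : Pt → V3} (s : Finset ι) (f : ι → Pt → ℝ) (p : Pt)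
    (hf : ∀ i ∈ s, DifferentiableAt ℝ (f i) p) :
    DtS v (fun q => ∑ i ∈ s, f i q) p = ∑ i ∈ s, DtS v (f i) p := by
  simp only [DtS_expand, ptd_sum s f p hf, pd_sum s f _ p hf, Finset.mul_sum,
    Finset.sum_add_distrib]
  congr 1
  exact Finset.sum_comm

/-- conservative form of the energy equation on the evolving
surface. With `q_S = κ ∇_Γ θ`, `T_S = μ D_Γ(v) + λ (div_Γ v) P − π P`,
`e_{D_S} = μ|D_Γ(v)|² + λ(div_Γ v)²`, `E = ρ|v|²/2 + ρ e`, if at `p` the surface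
continuity, internal energy (with source `G`) and momentum (with force `F`)
equations hold, then `D_t^N E + div_Γ (E v − q_S − T_S v) = F·v + G` at `p`. -/
theorem conservative_energy_form_surface
    (ρ e θ pres mu lam κ G : Pt → ℝ) (v F n : Pt → V3)
    (hρ : ContDiff ℝ (⊤ : ℕ∞) ρ) (he : ContDiff ℝ (⊤ : ℕ∞) e) (hθ : ContDiff ℝ (⊤ : ℕ∞) θ)
    (hpres : ContDiff ℝ (⊤ : ℕ∞) pres) (hmu : ContDiff ℝ (⊤ : ℕ∞) mu)
    (hlam : ContDiff ℝ (⊤ : ℕ∞) lam) (hκ : ContDiff ℝ (⊤ : ℕ∞) κ)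
    (hG : ContDiff ℝ (⊤ : ℕ∞) G) (hv : ContDiff ℝ (⊤ : ℕ∞) v)
    (hF : ContDiff ℝ (⊤ : ℕ∞) F) (hn : ContDiff ℝ (⊤ : ℕ∞) n)
    (hunit : ∀ p, dot (n p) (n p) = 1)
    (p : Pt)
    (hcont : DtS v ρ p + divG n v p * ρ p = 0)
    (henergy : ρ p * DtS v e p + divG n v p * pres p
      = divG n (fun q => κ q • gradG n θ q) p
        + (mu p * frob (DGam n v p) (DGam n v p) + lam p * (divG n v p) ^ 2)
        + G p)
    (hmom : ∀ i, ρ p * DtS v (fun q => v q i) p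
      = divGM n (fun q => TS n v mu lam pres q) p i + F p i) :
    DtN v n (Efun ρ e v) p
      + divG n (fun q => Efun ρ e v q • v q - κ q • gradG n θ q
          - (TS n v mu lam pres q).mulVec (v q)) p
      = dot (F p) (v p) + G p := by
  classical
  -- abbreviation for the stress tensor as a function
  set T : Pt → Matrix (Fin 3) (Fin 3) ℝ := fun q => TS n v mu lam pres q with hT
  -- component smoothness
  have hvC : ∀ i, ContDiff ℝ (⊤ : ℕ∞) fun q => v q i := fun i => (contDiff_pi.mp hv) i
  have hnC : ∀ i, ContDiff ℝ (⊤ : ℕ∞) fun q => n q i := fun i => (contDiff_pi.mp hn) i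
  have hMC : ∀ i j, ContDiff ℝ (⊤ : ℕ∞) fun q => gradGM n v q i j :=
    fun i j => contDiff_pdG hn (hvC i) j
  have hPC : ∀ i j, ContDiff ℝ (⊤ : ℕ∞) fun q => Pmat n q i j := by
    intro i j
    have h : (fun q => Pmat n q i j)
        = fun q => (if i = j then (1:ℝ) else 0) - n q i * n q j := rfl
    rw [h]
    exact contDiff_const.sub ((hnC i).mul (hnC j))
  have hdivC : ContDiff ℝ (⊤ : ℕ∞) fun q => divG n v q :=
    ContDiff.sum fun j _ => contDiff_pdG hn (hvC j) j
  have hPMC : ∀ i j, ContDiff ℝ (⊤ : ℕ∞) fun q => (Pmat n q * gradGM n v q) i j := by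
    intro i j
    have h : (fun q => (Pmat n q * gradGM n v q) i j)
        = fun q => ∑ k, Pmat n q i k * gradGM n v q k j := by
      funext q; rw [Matrix.mul_apply]
    rw [h]
    exact ContDiff.sum fun k _ => (hPC i k).mul (hMC k j)
  have hDC : ∀ i j, ContDiff ℝ (⊤ : ℕ∞) fun q => DGam n v q i j := by
    intro i j
    have h : (fun q => DGam n v q i j)
        = fun q => (2:ℝ)⁻¹ * ((Pmat n q * gradGM n v q) i j
            + (Pmat n q * gradGM n v q) j i) := by
      funext q
      simp only [DGam, Matrix.smul_apply, Matrix.add_apply, Matrix.transpose_apply,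
        smul_eq_mul]
    rw [h]
    exact contDiff_const.mul ((hPMC i j).add (hPMC j i))
  have hTSC : ∀ i j, ContDiff ℝ (⊤ : ℕ∞) fun q => T q i j := by
    intro i j
    have h : (fun q => T q i j)
        = fun q => mu q * DGam n v q i j + lam q * divG n v q * Pmat n q i j
            - pres q * Pmat n q i j := by
      funext q
      simp [hT, TS, Matrix.sub_apply, Matrix.add_apply, Matrix.smul_apply, smul_eq_mul]
    rw [h]
    exact ((hmu.mul (hDC i j)).add (((hlam.mul hdivC)).mul (hPC i j))).sub
      (hpres.mul (hPC i j))
  have hEC : ContDiff ℝ (⊤ : ℕ∞) (Efun ρ e v) := by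
    have h : Efun ρ e v = fun q => ρ q * (∑ i, v q i * v q i) / 2 + ρ q * e q := by
      funext q; simp [Efun, dot]
    rw [h]
    exact ((hρ.mul (ContDiff.sum fun i _ => (hvC i).mul (hvC i))).div_const 2).add (hρ.mul he)
  have hqC : ∀ j, ContDiff ℝ (⊤ : ℕ∞) fun q => κ q * pdG n θ j q :=
    fun j => hκ.mul (contDiff_pdG hn hθ j)
  -- pointwise differentiability
  have dd : ∀ {f : Pt → ℝ}, ContDiff ℝ (⊤ : ℕ∞) f → DifferentiableAt ℝ f p :=
    fun h => (h.differentiable (by simp)).differentiableAt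
  -- symmetry of the stress tensor
  have hTSsym : ∀ q i j, T q i j = T q j i := by
    intro q i j
    simp only [hT, TS, DGam, Pmat, Matrix.sub_apply, Matrix.add_apply, Matrix.smul_apply,
      Matrix.transpose_apply, smul_eq_mul, Matrix.of_apply]
    by_cases hij : i = j
    · subst hij; ring
    · rw [if_neg hij, if_neg (Ne.symm hij)]; ring
  -- expansion of the heat flux divergence
  have hqs_expand : divG n (fun q => κ q • gradG n θ q) p
      = ∑ j, pdG n (fun q => κ q * pdG n θ j q) j p := by
    unfold divG
    refine Finset.sum_congr rfl fun j _ => ?_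
    congr 1
  -- per-component expansion of the big divergence
  have hterm : ∀ j, pdG n (fun q => (Efun ρ e v q • v q - κ q • gradG n θ q
        - (T q).mulVec (v q)) j) j p
      = (Efun ρ e v p * pdG n (fun q => v q j) j p + v p j * pdG n (Efun ρ e v) j p
          - pdG n (fun q => κ q * pdG n θ j q) j p)
        - ∑ i, (T p j i * pdG n (fun q => v q i) j p
            + v p i * pdG n (fun q => T q j i) j p) := by
    intro j
    have e0 : (fun q => (Efun ρ e v q • v q - κ q • gradG n θ q - (T q).mulVec (v q)) j)
        = fun q => (Efun ρ e v q * v q j - κ q * pdG n θ j q)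
            - ∑ i, T q j i * v q i := by
      funext q
      simp [Pi.sub_apply, Pi.smul_apply, smul_eq_mul, Matrix.mulVec, dotProduct, gradG]
    rw [e0]
    rw [pdG_sub ((dd hEC).fun_mul (dd (hvC j)) |>.fun_sub (dd (hqC j)))
      (DifferentiableAt.fun_sum fun i _ => (dd (hTSC j i)).fun_mul (dd (hvC i)))]
    rw [pdG_sub ((dd hEC).fun_mul (dd (hvC j))) (dd (hqC j))]
    rw [pdG_mul (dd hEC) (dd (hvC j))]
    rw [pdG_sum _ _ _ _ (fun i _ => (dd (hTSC j i)).fun_mul (dd (hvC i)))]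
    congr 1
    refine Finset.sum_congr rfl fun i _ => ?_
    rw [pdG_mul (dd (hTSC j i)) (dd (hvC i))]
  -- total divergence split
  have hsplit : divG n (fun q => Efun ρ e v q • v q - κ q • gradG n θ q
        - (T q).mulVec (v q)) p
      = (Efun ρ e v p * divG n v p + ∑ j, v p j * pdG n (Efun ρ e v) j p)
        - divG n (fun q => κ q • gradG n θ q) p
        - (frob (T p) (gradGM n v p) + ∑ i, v p i * divGM n T p i) := by
    have h0 : divG n (fun q => Efun ρ e v q • v q - κ q • gradG n θ q
          - (T q).mulVec (v q)) p
        = ∑ j, ((Efun ρ e v p * pdG n (fun q => v q j) j p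
              + v p j * pdG n (Efun ρ e v) j p
              - pdG n (fun q => κ q * pdG n θ j q) j p)
            - ∑ i, (T p j i * pdG n (fun q => v q i) j p
                + v p i * pdG n (fun q => T q j i) j p)) :=
      Finset.sum_congr rfl fun j _ => hterm j
    rw [h0, Finset.sum_sub_distrib, Finset.sum_sub_distrib]
    congr 1
    · congr 1
      rw [Finset.sum_add_distrib, ← Finset.mul_sum]
      rfl
    · rw [Finset.sum_comm]
      simp only [Finset.sum_add_distrib]
      congr 1
      · rw [frob]
        refine Finset.sum_congr rfl fun i _ => Finset.sum_congr rfl fun j _ => ?_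
        rw [hTSsym p j i]
        rfl
      · refine Finset.sum_congr rfl fun i _ => ?_
        rw [← Finset.mul_sum]
        congr 1
        refine Finset.sum_congr rfl fun j _ => ?_
        congr 1
        funext q
        exact hTSsym q j i
  -- DtN versus DtS
  have hDtN : DtN v n (Efun ρ e v) p
      = DtS v (Efun ρ e v) p - ∑ j, v p j * pdG n (Efun ρ e v) j p := by
    simp only [DtN, DtS, pdG_expand, dot, grad, Fin.sum_univ_three]; ring
  -- expansion of DtS of the energy
  have hDtSE : DtS v (Efun ρ e v) p
      = DtS v ρ p * ((∑ i, v p i * v p i) * (2:ℝ)⁻¹ + e p)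
        + ρ p * ((∑ i, v p i * DtS v (fun q => v q i) p) + DtS v e p) := by
    have hEeq : Efun ρ e v
        = fun q => ρ q * ((∑ i, v q i * v q i) * (2:ℝ)⁻¹ + e q) := by
      funext q; simp [Efun, dot]; ring
    have hKC : ContDiff ℝ (⊤ : ℕ∞) fun q => (∑ i, v q i * v q i) * (2:ℝ)⁻¹ :=
      (ContDiff.sum fun i _ => (hvC i).mul (hvC i)).mul contDiff_const
    have hgC : ContDiff ℝ (⊤ : ℕ∞) fun q => (∑ i, v q i * v q i) * (2:ℝ)⁻¹ + e q := hKC.add he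
    rw [hEeq, DtS_mul (dd hρ) (dd hgC), DtS_add (dd hKC) (dd he),
      DtS_mul_const (dd (ContDiff.sum fun i _ => (hvC i).mul (hvC i))),
      DtS_sum _ _ _ (fun i _ => (dd (hvC i)).fun_mul (dd (hvC i)))]
    have h2 : ∀ i, DtS v (fun q => v q i * v q i) p
        = 2 * (v p i * DtS v (fun q => v q i) p) := by
      intro i; rw [DtS_mul (dd (hvC i)) (dd (hvC i))]; ring
    rw [Finset.sum_congr rfl fun i _ => h2 i]
    simp only [Fin.sum_univ_three]
    ring
  -- the stress power identity
  have hfrob := frob_TS_main n v mu lam pres p (hunit p)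
  -- put everything together
  rw [hDtN, hsplit, hDtSE, hfrob]
  have hm0 := hmom 0
  have hm1 := hmom 1
  have hm2 := hmom 2
  rw [hqs_expand] at henergy
  rw [hqs_expand]
  simp only [Efun, dot, Fin.sum_univ_three] at *
  linear_combination (((v p 0 * v p 0 + v p 1 * v p 1 + v p 2 * v p 2)) * (2:ℝ)⁻¹ + e p) * hcont
    + henergy + v p 0 * hm0 + v p 1 * hm1 + v p 2 * hm2
end
end
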